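/- For all positive integers m and n, T(m,n) = P(m,n) − N(m,n), where P(m,n) is the number of 2-Motzkin paths of length m+n−2 whose m-th step begins on an even level, and N(m,n) is the number of 2-Motzkin paths of length m+n−2 whose m-th step begins on an odd level. -/

import Mathlib

/-- Steps of a 2-Motzkin path: up, down, and two kinds of level steps. -/
inductive MStep : Type
  | up | down | straight | wavy
deriving DecidableEq

/-- The vertical displacement of a 2-Motzkin step. -/
def mval : MStep → ℤ
  | .up => 1
  | .down => -1
  | .straight => 0
  | .wavy => 0

/-- The level (y-coordinate) of the path `p` after `k` steps. -/
def mlvl (p : List MStep) (k : ℕ) : ℤ := ((p.take k).map mval).sum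

/-- `p` is a 2-Motzkin path: it ends on the x-axis and never goes below it. -/
def IsMotzkin2 (p : List MStep) : Prop :=
  mlvl p p.length = 0 ∧ ∀ k ≤ p.length, 0 ≤ mlvl p k

/-- The super Catalan number `T(m,n)` as a rational number. -/
def T (m n : ℕ) : ℚ :=
  (Nat.factorial (2 * m) * Nat.factorial (2 * n) : ℚ) /
    (2 * (Nat.factorial m * Nat.factorial n * Nat.factorial (m + n)))

/-!
Cut a 2-Motzkin path of length `a + b` after its `a`-th step, at level `h`: this leaves a
nonnegative path of length `a` from `0` up to `h` and one of length `b` from `h` down to `0`.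
Reversing the first, both are counted by the ballot numbers
`B_n(h) = C(2n+1, n-h) - C(2n+1, n-h-1)`, so `P - N = S(a, b) := ∑ₕ (-1)^h B_a(h) B_b(h)`.
The recurrence `B_{n+1}(h) = B_n(h+1) + 2 B_n(h) + B_n(h-1)` makes `S`
telescope into `S(a, b+1) + S(a+1, b) = 4 S(a, b)`, which is also the recurrence of
`T(a+1, b+1)`, and at `b = 0` both equal the Catalan number `C_{a+1}`.
-/

open Finset

def intChoose (n : ℕ) (k : ℤ) : ℕ := if 0 ≤ k then n.choose k.toNat else 0

@[simp]
lemma intChoose_natCast (n k : ℕ) : intChoose n k = n.choose k := by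
  simp [intChoose]

lemma intChoose_of_neg {n : ℕ} {k : ℤ} (hk : k < 0) : intChoose n k = 0 := by
  simp [intChoose, hk.not_ge]

lemma intChoose_succ (n : ℕ) (k : ℤ) :
    intChoose (n + 1) k = intChoose n k + intChoose n (k - 1) := by
  rcases lt_or_ge k 0 with hk | hk
  · rw [intChoose_of_neg hk, intChoose_of_neg hk, intChoose_of_neg (by omega)]
  obtain ⟨t, rfl⟩ := Int.eq_ofNat_of_zero_le hk
  cases t with
  | zero => rw [intChoose_natCast, intChoose_natCast, intChoose_of_neg (by omega)]; simp
  | succ t =>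
    rw [Nat.cast_succ, add_sub_cancel_right, ← Nat.cast_succ, intChoose_natCast,
      intChoose_natCast, intChoose_natCast, Nat.choose_succ_succ', add_comm]

lemma intChoose_add_two (n : ℕ) (k : ℤ) :
    intChoose (n + 2) k = intChoose n k + 2 * intChoose n (k - 1) + intChoose n (k - 2) := by
  rw [intChoose_succ, intChoose_succ, intChoose_succ, sub_sub, one_add_one_eq_two]
  ring

-- A 2-Motzkin step is a pair of ±1 steps, so these are ballot numbers by the reflection
-- principle; `card_isMotzkinFrom` shows they count nonnegative 2-Motzkin paths of length `n`
-- from level `h` down to `0`.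
def ballot (n : ℕ) (h : ℤ) : ℤ :=
  intChoose (2 * n + 1) (n - h) - intChoose (2 * n + 1) (n - h - 1)

lemma ballot_succ (n : ℕ) (h : ℤ) :
    ballot (n + 1) h = ballot n (h + 1) + 2 * ballot n h + ballot n (h - 1) := by
  simp only [ballot, show 2 * (n + 1) + 1 = 2 * n + 1 + 2 by ring, intChoose_add_two]
  push_cast
  ring_nf

lemma ballot_of_lt {n : ℕ} {h : ℤ} (hh : n < h) : ballot n h = 0 := by
  rw [ballot, intChoose_of_neg (by omega), intChoose_of_neg (by omega), sub_self]

lemma ballot_neg_one (n : ℕ) : ballot n (-1) = 0 := by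
  have h1 : (n : ℤ) - -1 = (n + 1 : ℕ) := by push_cast; ring
  have h2 : (n : ℤ) - -1 - 1 = (n : ℕ) := by ring
  rw [ballot, h2, h1, intChoose_natCast, intChoose_natCast, Nat.choose_symm_half, sub_self]

lemma ballot_zero_right (n : ℕ) : ballot n 0 = catalan (n + 1) := by
  have hcat : ((n + 2 : ℕ) : ℤ) * catalan (n + 1) = (2 * (n + 1)).choose (n + 1) := by
    rw [← Nat.cast_mul, succ_mul_catalan_eq_centralBinom, Nat.centralBinom_eq_two_mul_choose]
  refine mul_left_cancel₀ (by positivity : ((n + 2 : ℕ) : ℤ) ≠ 0) (hcat ▸ ?_)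
  cases n with
  | zero => simp [ballot, intChoose]
  | succ t =>
    have hsym := Nat.choose_symm_half (t + 1)
    have hstep := Nat.choose_succ_right_eq (2 * (t + 1) + 1) t
    have hpascal := Nat.choose_succ_succ' (2 * (t + 1) + 1) (t + 1)
    rw [show 2 * (t + 1) + 1 - t = t + 3 by omega] at hstep
    rw [show 2 * (t + 1 + 1) = 2 * (t + 1) + 1 + 1 by ring, hpascal, hsym]
    simp only [ballot, sub_zero, show ((t + 1 : ℕ) : ℤ) - 1 = (t : ℕ) by push_cast; ring,
      intChoose_natCast]
    zify at hstep
    push_cast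
    linear_combination hstep

lemma T_succ_one (n : ℕ) : T (n + 1) 1 = catalan (n + 1) := by
  have hcat : (catalan (n + 1) : ℚ) * (n + 2 : ℕ) = (2 * (n + 1)).choose (n + 1) := by
    rw [← Nat.cast_mul, mul_comm, succ_mul_catalan_eq_centralBinom,
      Nat.centralBinom_eq_two_mul_choose]
  have hfac := Nat.choose_mul_factorial_mul_factorial (show n + 1 ≤ 2 * (n + 1) by omega)
  rw [show 2 * (n + 1) - (n + 1) = n + 1 by omega] at hfac
  rw [eq_div_of_mul_eq (by positivity) hcat, T, ← hfac, show n + 1 + 1 = n + 2 from rfl,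
    Nat.factorial_succ (n + 1)]
  push_cast
  field_simp
  ring

lemma T_succ_left_add_T_succ_right (m n : ℕ) : T (m + 1) n + T m (n + 1) = 4 * T m n := by
  simp only [T, show 2 * (m + 1) = 2 * m + 1 + 1 by ring,
    show 2 * (n + 1) = 2 * n + 1 + 1 by ring, show m + 1 + n = m + n + 1 by ring,
    show m + (n + 1) = m + n + 1 by ring, Nat.factorial_succ]
  push_cast
  field_simp
  ring

def altSum (a b : ℕ) : ℤ := ∑ h ∈ range (a + 1), (-1) ^ h * ballot a h * ballot b h

lemma altSum_eq_sum_range {a N : ℕ} (b : ℕ) (hN : a < N) :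
    altSum a b = ∑ h ∈ range N, (-1) ^ h * ballot a h * ballot b h := by
  refine sum_subset (range_subset_range.mpr hN) fun h _ hh => ?_
  rw [ballot_of_lt (by simp at hh; omega), mul_zero, zero_mul]

lemma altSum_add_altSum (a b : ℕ) : altSum a (b + 1) + altSum (a + 1) b = 4 * altSum a b := by
  let d (h : ℕ) : ℤ :=
    (-1) ^ h * (ballot a h * ballot b (h - 1) + ballot a (h - 1) * ballot b h)
  -- `ballot_succ` turns the summand into a telescoping difference
  have hterm (h : ℕ) :
      (-1) ^ h * ballot a h * ballot (b + 1) h + (-1) ^ h * ballot (a + 1) h * ballot b h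
        - 4 * ((-1) ^ h * ballot a h * ballot b h) = d h - d (h + 1) := by
    simp only [d, ballot_succ, pow_succ, Nat.cast_succ, add_sub_cancel_right]
    ring
  have hd0 : d 0 = 0 := by simp [d, ballot_neg_one]
  have hdN : d (a + 2) = 0 := by
    simp only [d]
    rw [ballot_of_lt (n := a) (by push_cast; omega), ballot_of_lt (n := a) (by push_cast; omega)]
    ring
  rw [← sub_eq_zero, altSum_eq_sum_range _ (show a < a + 2 by omega),
    altSum_eq_sum_range (a := a + 1) _ (show a + 1 < a + 2 by omega),
    altSum_eq_sum_range _ (show a < a + 2 by omega), mul_sum, ← sum_add_distrib,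
    ← sum_sub_distrib, sum_congr rfl fun h _ => hterm h, sum_range_sub', hd0, hdN, sub_zero]

lemma altSum_zero_right (a : ℕ) : altSum a 0 = catalan (a + 1) := by
  rw [altSum, sum_eq_single 0
    (fun h _ hh => by rw [ballot_of_lt (n := 0) (h := h) (by omega), mul_zero]) (by simp)]
  simp only [pow_zero, one_mul, Nat.cast_zero, ballot_zero_right, zero_add, catalan_one]
  push_cast
  ring

lemma altSum_eq_T (a b : ℕ) : (altSum a b : ℚ) = T (a + 1) (b + 1) := by
  induction b generalizing a with
  | zero => rw [altSum_zero_right, T_succ_one]; push_cast; rfl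
  | succ b ih =>
    have hS : (altSum a (b + 1) : ℚ) = 4 * altSum a b - altSum (a + 1) b := by
      rw [eq_sub_iff_add_eq]; exact_mod_cast altSum_add_altSum a b
    rw [hS, ih, ih]
    linarith [T_succ_left_add_T_succ_right (a + 1) (b + 1)]

instance : Fintype MStep :=
  ⟨{.up, .down, .straight, .wavy}, fun s => by cases s <;> simp⟩

lemma MStep.sum_univ {M : Type*} [AddCommMonoid M] (f : MStep → M) :
    ∑ s, f s = f .up + f .down + f .straight + f .wavy := by
  rw [show (univ : Finset MStep) = {.up, .down, .straight, .wavy} from rfl]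
  simp [add_assoc]

def listsOfLength (α : Type*) [Fintype α] : ℕ → Finset (List α)
  | 0 => {[]}
  | n + 1 => (univ ×ˢ listsOfLength α n).map
      ⟨fun x => x.1 :: x.2, fun _ _ h => Prod.ext_iff.mpr (List.cons_eq_cons.mp h)⟩

section listsOfLength

variable {α : Type*} [Fintype α]

@[simp]
lemma mem_listsOfLength {n : ℕ} {p : List α} : p ∈ listsOfLength α n ↔ p.length = n := by
  induction n generalizing p with
  | zero => simp [listsOfLength]
  | succ n ih =>
    cases p with
    | nil => simp [listsOfLength]
    | cons s q =>
      simp only [listsOfLength, mem_map, mem_product, mem_univ, true_and, ih]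
      constructor
      · rintro ⟨⟨s', q'⟩, hq, h⟩
        obtain ⟨rfl, rfl⟩ := List.cons_eq_cons.mp h
        simpa using hq
      · intro hq
        exact ⟨(s, q), by simpa using hq, rfl⟩

lemma card_filter_listsOfLength_succ (P : List α → Prop) [DecidablePred P] (n : ℕ) :
    #{q ∈ listsOfLength α (n + 1) | P q} = ∑ s, #{q ∈ listsOfLength α n | P (s :: q)} := by
  simp only [card_filter, listsOfLength, sum_map, sum_product]
  rfl

end listsOfLength

@[simp]
lemma mlvl_zero (p : List MStep) : mlvl p 0 = 0 := rfl

lemma mlvl_cons_succ (s : MStep) (p : List MStep) (k : ℕ) :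
    mlvl (s :: p) (k + 1) = mval s + mlvl p k := by
  simp [mlvl]

lemma mlvl_le (p : List MStep) (k : ℕ) : mlvl p k ≤ k := by
  calc mlvl p k ≤ ((p.take k).map mval).length • (1 : ℤ) :=
        List.sum_le_card_nsmul _ _ <| by
          simp only [List.mem_map]
          rintro _ ⟨s, -, rfl⟩
          cases s <;> simp [mval]
    _ ≤ k := by simp

lemma mlvl_append_of_le {p : List MStep} (q : List MStep) {k : ℕ} (hk : k ≤ p.length) :
    mlvl (p ++ q) k = mlvl p k := by
  rw [mlvl, List.take_append_of_le_length hk, mlvl]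

lemma mlvl_append_length_add (p q : List MStep) (j : ℕ) :
    mlvl (p ++ q) (p.length + j) = mlvl p p.length + mlvl q j := by
  simp [mlvl, List.take_append, List.take_of_length_le]

def IsMotzkinFrom (h : ℤ) (q : List MStep) : Prop :=
  (∀ k ≤ q.length, 0 ≤ h + mlvl q k) ∧ h + mlvl q q.length = 0

def IsMotzkinTo (h : ℤ) (p : List MStep) : Prop :=
  (∀ k ≤ p.length, 0 ≤ mlvl p k) ∧ mlvl p p.length = h

instance (h : ℤ) : DecidablePred (IsMotzkinFrom h) :=
  fun _ => inferInstanceAs (Decidable (_ ∧ _))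

instance (h : ℤ) : DecidablePred (IsMotzkinTo h) :=
  fun _ => inferInstanceAs (Decidable (_ ∧ _))

instance : DecidablePred IsMotzkin2 :=
  fun _ => inferInstanceAs (Decidable (_ ∧ _))

lemma isMotzkinFrom_nil {h : ℤ} : IsMotzkinFrom h [] ↔ h = 0 := by
  simp +contextual [IsMotzkinFrom, mlvl]

lemma isMotzkinFrom_cons {h : ℤ} (hh : 0 ≤ h) (s : MStep) (q : List MStep) :
    IsMotzkinFrom h (s :: q) ↔ IsMotzkinFrom (h + mval s) q := by
  constructor
  · rintro ⟨hall, hend⟩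
    refine ⟨fun k hk => ?_, ?_⟩
    · simpa [mlvl_cons_succ, add_assoc] using hall (k + 1) (by simpa using hk)
    · simpa [mlvl_cons_succ, add_assoc] using hend
  · rintro ⟨hall, hend⟩
    refine ⟨fun k hk => ?_, by simpa [mlvl_cons_succ, add_assoc] using hend⟩
    cases k with
    | zero => simpa using hh
    | succ k => simpa [mlvl_cons_succ, add_assoc] using hall k (by simpa using hk)

lemma card_isMotzkinFrom_of_neg {h : ℤ} (hh : h < 0) (n : ℕ) :
    #{q ∈ listsOfLength MStep n | IsMotzkinFrom h q} = 0 :=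
  card_eq_zero.mpr <| filter_eq_empty_iff.mpr fun q _ hq => by
    simpa using hq.1 0 (by omega) |>.trans_lt' hh

lemma card_isMotzkinFrom_succ {h : ℤ} (hh : 0 ≤ h) (n : ℕ) :
    #{q ∈ listsOfLength MStep (n + 1) | IsMotzkinFrom h q} =
      #{q ∈ listsOfLength MStep n | IsMotzkinFrom (h + 1) q}
      + 2 * #{q ∈ listsOfLength MStep n | IsMotzkinFrom h q}
      + #{q ∈ listsOfLength MStep n | IsMotzkinFrom (h - 1) q} := by
  simp only [card_filter_listsOfLength_succ, MStep.sum_univ, isMotzkinFrom_cons hh, mval,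
    add_zero, ← sub_eq_add_neg]
  ring

lemma card_isMotzkinFrom {h : ℤ} (hh : 0 ≤ h) (n : ℕ) :
    (#{q ∈ listsOfLength MStep n | IsMotzkinFrom h q} : ℤ) = ballot n h := by
  induction n generalizing h with
  | zero =>
    rcases hh.eq_or_lt with rfl | hpos
    · simp [listsOfLength, filter_singleton, isMotzkinFrom_nil, ballot_zero_right]
    · rw [ballot_of_lt (by simpa using hpos)]
      simp [listsOfLength, filter_singleton, isMotzkinFrom_nil, hpos.ne']
  | succ n ih =>
    have hdown :
        (#{q ∈ listsOfLength MStep n | IsMotzkinFrom (h - 1) q} : ℤ) = ballot n (h - 1) := by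
      rcases hh.eq_or_lt with rfl | hpos
      · rw [card_isMotzkinFrom_of_neg (by norm_num), zero_sub, ballot_neg_one, Nat.cast_zero]
      · exact ih (by omega)
    rw [card_isMotzkinFrom_succ hh, ballot_succ]
    push_cast
    rw [ih (by omega), ih hh, hdown]

def MStep.flip : MStep → MStep
  | .up => .down
  | .down => .up
  | .straight => .straight
  | .wavy => .wavy

lemma MStep.flip_flip (s : MStep) : s.flip.flip = s := by cases s <;> rfl

lemma mval_flip (s : MStep) : mval s.flip = -mval s := by cases s <;> rfl

def reversePath (p : List MStep) : List MStep := (p.map MStep.flip).reverse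

lemma reversePath_involutive : Function.Involutive reversePath := fun p => by
  simp [reversePath, List.map_reverse, Function.comp_def, MStep.flip_flip]

@[simp]
lemma length_reversePath (p : List MStep) : (reversePath p).length = p.length := by
  simp [reversePath]

lemma mlvl_add (p : List MStep) (a j : ℕ) : mlvl p (a + j) = mlvl p a + mlvl (p.drop a) j := by
  rw [mlvl, List.take_add, List.map_append, List.sum_append, mlvl, mlvl]

lemma mlvl_reversePath {p : List MStep} {k : ℕ} (hk : k ≤ p.length) :
    mlvl (reversePath p) k = mlvl p (p.length - k) - mlvl p p.length := by
  have hneg : mlvl (reversePath p) k = -mlvl (p.drop (p.length - k)) k := by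
    simp [mlvl, reversePath, List.take_reverse, Function.comp_def, mval_flip, List.sum_neg,
      List.take_of_length_le, hk]
  have hsplit := mlvl_add p (p.length - k) k
  rw [Nat.sub_add_cancel hk] at hsplit
  rw [hneg, hsplit]
  ring

lemma isMotzkinTo_iff_isMotzkinFrom_reversePath (h : ℤ) (p : List MStep) :
    IsMotzkinTo h p ↔ IsMotzkinFrom h (reversePath p) := by
  simp only [IsMotzkinTo, IsMotzkinFrom, length_reversePath]
  rw [mlvl_reversePath le_rfl, Nat.sub_self, mlvl_zero, zero_sub, add_neg_eq_zero, eq_comm]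
  refine and_congr_left fun hend => ⟨fun hall k hk => ?_, fun hall k hk => ?_⟩
  · rw [mlvl_reversePath hk, ← hend]
    linarith [hall (p.length - k) (by omega)]
  · have := hall (p.length - k) (by omega)
    rwa [mlvl_reversePath (by omega), Nat.sub_sub_self hk, ← hend, add_sub_cancel] at this

lemma card_isMotzkinTo (h : ℤ) (n : ℕ) :
    #{p ∈ listsOfLength MStep n | IsMotzkinTo h p} =
      #{q ∈ listsOfLength MStep n | IsMotzkinFrom h q} := by
  refine card_nbij' reversePath reversePath (fun p hp => ?_) (fun q hq => ?_)
    (fun p _ => reversePath_involutive p) (fun q _ => reversePath_involutive q)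
  · simp_all [isMotzkinTo_iff_isMotzkinFrom_reversePath]
  · simp_all [isMotzkinTo_iff_isMotzkinFrom_reversePath, reversePath_involutive q]

lemma isMotzkin2_append_and_mlvl_iff (h : ℤ) (p q : List MStep) :
    IsMotzkin2 (p ++ q) ∧ mlvl (p ++ q) p.length = h ↔
      IsMotzkinTo h p ∧ IsMotzkinFrom h q := by
  have hleft {k} (hk : k ≤ p.length) := mlvl_append_of_le q hk
  have hright := mlvl_append_length_add p q
  simp only [IsMotzkin2, IsMotzkinTo, IsMotzkinFrom, List.length_append, hright, hleft le_rfl]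
  constructor
  · rintro ⟨⟨hend, hall⟩, rfl⟩
    exact ⟨⟨fun k hk => hleft hk ▸ hall k (by omega), rfl⟩,
      fun k hk => hright k ▸ hall (p.length + k) (by omega), hend⟩
  · rintro ⟨⟨hallp, rfl⟩, hallq, hend⟩
    refine ⟨⟨hend, fun k hk => ?_⟩, rfl⟩
    rcases le_or_gt k p.length with hkp | hkp
    · exact hleft hkp ▸ hallp k hkp
    · obtain ⟨j, rfl⟩ := Nat.exists_eq_add_of_lt hkp
      rw [add_assoc, hright]
      exact hallq _ (by omega)

lemma card_isMotzkin2_mlvl_eq (a b : ℕ) (h : ℤ) :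
    #{r ∈ listsOfLength MStep (a + b) | IsMotzkin2 r ∧ mlvl r a = h} =
      #{p ∈ listsOfLength MStep a | IsMotzkinTo h p} *
        #{q ∈ listsOfLength MStep b | IsMotzkinFrom h q} := by
  rw [← card_product]
  refine card_nbij' (fun r => (r.take a, r.drop a)) (fun x => x.1 ++ x.2) ?_ ?_ ?_ ?_
  · intro r hr
    simp only [coe_filter, mem_listsOfLength, Set.mem_ofPred_eq] at hr
    obtain ⟨hlen, hr⟩ := hr
    have hsplit := (isMotzkin2_append_and_mlvl_iff h (r.take a) (r.drop a)).mp
    rw [List.take_append_drop, List.length_take_of_le (by omega)] at hsplit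
    obtain ⟨hp, hq⟩ := hsplit hr
    simp [hp, hq, hlen]
  · rintro ⟨p, q⟩ hx
    simp only [coe_product, coe_filter, Set.mem_prod, mem_listsOfLength,
      Set.mem_ofPred_eq] at hx ⊢
    obtain ⟨⟨rfl, hp⟩, rfl, hq⟩ := hx
    exact ⟨List.length_append, (isMotzkin2_append_and_mlvl_iff h p q).mpr ⟨hp, hq⟩⟩
  · intro r _
    exact List.take_append_drop a r
  · rintro ⟨p, q⟩ hx
    simp only [coe_product, coe_filter, Set.mem_prod, mem_listsOfLength, Set.mem_ofPred_eq] at hx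
    simp [← hx.1.1]

lemma card_filter_even_sub_card_filter_odd {ι : Type*} (s : Finset ι) (f : ι → ℤ) :
    (#{x ∈ s | Even (f x)} : ℤ) - #{x ∈ s | Odd (f x)} =
      ∑ x ∈ s, ((f x).negOnePow : ℤ) := by
  have heven : ∑ x ∈ s with Even (f x), ((f x).negOnePow : ℤ) = #{x ∈ s | Even (f x)} := by
    rw [card_eq_sum_ones, Nat.cast_sum]
    exact sum_congr rfl fun x hx => by simp [Int.negOnePow_even _ (mem_filter.mp hx).2]
  have hodd : ∑ x ∈ s with ¬Even (f x), ((f x).negOnePow : ℤ) = -#{x ∈ s | Odd (f x)} := by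
    simp only [Int.not_even_iff_odd]
    rw [card_eq_sum_ones, Nat.cast_sum, ← sum_neg_distrib]
    exact sum_congr rfl fun x hx => by simp [Int.negOnePow_odd _ (mem_filter.mp hx).2]
  rw [← sum_filter_add_sum_filter_not s (fun x => Even (f x)), heven, hodd, sub_eq_add_neg]

lemma sum_negOnePow_mlvl_eq_altSum (a b : ℕ) :
    ∑ r ∈ listsOfLength MStep (a + b) with IsMotzkin2 r, ((mlvl r a).negOnePow : ℤ) =
      altSum a b := by
  have hlvl {r} (hr : r ∈ listsOfLength MStep (a + b) ∧ IsMotzkin2 r) :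
      0 ≤ mlvl r a ∧ mlvl r a ≤ a :=
    ⟨hr.2.2 a (by rw [mem_listsOfLength.mp hr.1]; omega), mlvl_le r a⟩
  rw [← sum_fiberwise_of_maps_to (g := fun r => (mlvl r a).toNat) (t := range (a + 1))
    fun r hr => mem_range.mpr (by have := hlvl (mem_filter.mp hr); omega), altSum]
  refine sum_congr rfl fun h _ => ?_
  have hfiber : {r ∈ listsOfLength MStep (a + b) | IsMotzkin2 r ∧ (mlvl r a).toNat = h} =
      {r ∈ listsOfLength MStep (a + b) | IsMotzkin2 r ∧ mlvl r a = h} :=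
    filter_congr fun r hr => ⟨fun h' => ⟨h'.1, by have := hlvl ⟨hr, h'.1⟩; omega⟩,
      fun h' => ⟨h'.1, by omega⟩⟩
  rw [filter_filter, hfiber,
    sum_congr rfl fun r hr => by rw [(mem_filter.mp hr).2.2, Int.coe_negOnePow_natCast],
    sum_const, card_isMotzkin2_mlvl_eq, card_isMotzkinTo, nsmul_eq_mul]
  push_cast
  rw [card_isMotzkinFrom (by positivity), card_isMotzkinFrom (by positivity)]
  ring

theorem T_eq_motzkin_difference (m n : ℕ) (hm : 0 < m) (hn : 0 < n) :
    T m n =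
      ({p : List MStep | IsMotzkin2 p ∧ p.length = m + n - 2 ∧
          Even (mlvl p (m - 1))}.ncard : ℚ) -
      ({p : List MStep | IsMotzkin2 p ∧ p.length = m + n - 2 ∧
          Odd (mlvl p (m - 1))}.ncard : ℚ) := by
  obtain ⟨a, rfl⟩ : ∃ a, m = a + 1 := ⟨m - 1, by omega⟩
  obtain ⟨b, rfl⟩ : ∃ b, n = b + 1 := ⟨n - 1, by omega⟩
  have hncard (P : ℤ → Prop) [DecidablePred P] :
      {p : List MStep | IsMotzkin2 p ∧ p.length = a + b ∧ P (mlvl p a)}.ncard =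
        #{p ∈ listsOfLength MStep (a + b) | IsMotzkin2 p ∧ P (mlvl p a)} := by
    rw [← Set.ncard_coe_finset]
    congr 1
    ext p
    simp [and_left_comm]
  rw [show a + 1 + (b + 1) - 2 = a + b by omega, Nat.add_sub_cancel, hncard Even, hncard Odd,
    ← altSum_eq_T, ← sum_negOnePow_mlvl_eq_altSum, ← card_filter_even_sub_card_filter_odd,
    filter_filter, filter_filter]
  push_cast
  rfl
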